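/- arXiv:2406.12455 — 6 statements merged into one kernel-verified Lean document; each statement's English description precedes it below -/
import Mathlib

section
/- Every positive integer can be expressed uniquely as a sum of distinct non-consecutive Fibonacci numbers (Zeckendorf's theorem). -/
/-!
Mathlib proves Zeckendorf's theorem for lists of `Nat.fib` indices that decrease in steps of at
least two and stay at least two (`List.IsZeckendorfRep`, `Nat.zeckendorf`). Shifting the indices
by one and sorting decreasingly identifies the finsets of the statement with exactly these lists,
and it preserves the Fibonacci sum.
-/

open List Nat

namespace List

theorem isZeckendorfRep_iff {l : List ℕ} :
    l.IsZeckendorfRep ↔ l.Pairwise (fun a b ↦ b + 2 ≤ a) ∧ ∀ a ∈ l, 2 ≤ a := by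
  have : Trans (fun a b : ℕ ↦ b + 2 ≤ a) (fun a b ↦ b + 2 ≤ a) (fun a b ↦ b + 2 ≤ a) :=
    ⟨fun hab hbc ↦ by omega⟩
  simp [IsZeckendorfRep, isChain_iff_pairwise, pairwise_append]

theorem pairwise_add_two_le_iff {l : List ℕ} (hl : l.Pairwise (· > ·)) :
    l.Pairwise (fun a b ↦ b + 2 ≤ a) ↔ ∀ a ∈ l, a + 1 ∉ l := by
  constructor
  · intro h a ha ha'
    have : Std.Symm (fun a b : ℕ ↦ b + 2 ≤ a ∨ a + 2 ≤ b) := ⟨fun _ _ ↦ Or.symm⟩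
    have := (h.imp (S := fun a b : ℕ ↦ b + 2 ≤ a ∨ a + 2 ≤ b) Or.inl).forall ha' ha (by omega)
    omega
  · intro h
    refine hl.imp_of_mem fun {a b} ha hb hab ↦ ?_
    have : b + 1 ≠ a := fun hba ↦ h b hb (hba ▸ ha)
    omega

end List

namespace Finset

def zeckendorfList (S : Finset ℕ) : List ℕ := (S.sort (· ≥ ·)).map (· + 1)

theorem isZeckendorfRep_zeckendorfList_iff (S : Finset ℕ) :
    (zeckendorfList S).IsZeckendorfRep ↔ (∀ i ∈ S, 1 ≤ i) ∧ ∀ i ∈ S, i + 1 ∉ S := by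
  have hS := (S.sortedGT_sort).pairwise
  simp only [zeckendorfList, isZeckendorfRep_iff, pairwise_map, List.forall_mem_map, Nat.reduceLeDiff,
    pairwise_add_two_le_iff hS, mem_sort, and_comm]

theorem sum_map_fib_zeckendorfList (S : Finset ℕ) :
    ((zeckendorfList S).map fib).sum = ∑ i ∈ S, fib (i + 1) := by
  rw [zeckendorfList, List.map_map, ← List.sum_toFinset _ (S.sort_nodup _), sort_toFinset]
  rfl

theorem zeckendorfList_injective : Function.Injective zeckendorfList := by
  intro S T h
  rw [← S.sort_toFinset (· ≥ ·), ← T.sort_toFinset (· ≥ ·),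
    (map_injective_iff.2 (add_left_injective 1)) h]

theorem exists_zeckendorfList_eq {l : List ℕ} (hl : l.IsZeckendorfRep) :
    ∃ S, zeckendorfList S = l := by
  rw [isZeckendorfRep_iff] at hl
  have hdec : (l.map (· - 1)).Pairwise (· > ·) :=
    pairwise_map.2 (hl.1.imp_of_mem fun {a b} _ hb hab ↦ by have := hl.2 b hb; omega)
  refine ⟨(l.map (· - 1)).toFinset, ?_⟩
  rw [zeckendorfList, (toFinset_sort _ hdec.nodup).2 (hdec.imp le_of_lt), List.map_map]
  exact (map_congr_left fun a ha ↦ Nat.sub_add_cancel (one_le_two.trans (hl.2 a ha))).trans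
    (map_id l)

end Finset

theorem zeckendorf_general (n : ℕ) :
    ∃! S : Finset ℕ, (∀ i ∈ S, 1 ≤ i) ∧ (∀ i ∈ S, i + 1 ∉ S) ∧
      n = ∑ i ∈ S, Nat.fib (i + 1) := by
  obtain ⟨S, hS⟩ := Finset.exists_zeckendorfList_eq (isZeckendorfRep_zeckendorf n)
  refine ⟨S, ?_, ?_⟩
  · dsimp only
    rw [← and_assoc, ← S.isZeckendorfRep_zeckendorfList_iff, ← S.sum_map_fib_zeckendorfList, hS]
    exact ⟨isZeckendorfRep_zeckendorf n, (sum_zeckendorf_fib n).symm⟩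
  · rintro T ⟨hT1, hT2, rfl⟩
    have hT := T.isZeckendorfRep_zeckendorfList_iff.2 ⟨hT1, hT2⟩
    apply Finset.zeckendorfList_injective
    rw [hS, ← T.sum_map_fib_zeckendorfList, zeckendorf_sum_fib hT]

/-- Zeckendorf's theorem: every positive integer is uniquely a sum of distinct
non-consecutive Fibonacci numbers `F_1 = 1, F_2 = 2, F_{n+2} = F_{n+1} + F_n`,
i.e. `F n = Nat.fib (n + 1)`. -/
theorem zeckendorf (n : ℕ) (hn : 0 < n) :
    ∃! S : Finset ℕ, (∀ i ∈ S, 1 ≤ i) ∧ (∀ i ∈ S, i + 1 ∉ S) ∧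
      n = ∑ i ∈ S, Nat.fib (i + 1) :=
  zeckendorf_general n
end

section
/- For every odd positive integer m that is not fibbinary, there exist a unique odd positive integer p and a unique odd fibbinary number q such that m = q + p · 2^{L(q)}, where L(q) is the number of binary digits of q. -/
/-- A natural number is fibbinary if its binary representation has no two consecutive 1 bits. -/
def Fibbinary (m : ℕ) : Prop := ∀ i : ℕ, ¬(m.testBit i ∧ m.testBit (i + 1))

/-!
Let `k` be the lowest index at which bits `k` and `k + 1` of `m` are both set. Then
`q = m % 2 ^ (k + 1)` is odd (as `m` is), fibbinary (by minimality of `k`) and has exactly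
`k + 1` digits (bit `k` is set), while `p = m / 2 ^ (k + 1)` is odd (bit `k + 1` is set).
Conversely, in any decomposition `m = q + p * 2 ^ L(q)` the top bit of `q` and the lowest bit
of `p` are adjacent ones of `m` at positions `L(q) - 1` and `L(q)`, and no such pair lies
further down because `q` is fibbinary. Hence `L(q) = k + 1`, and `p`, `q` are the quotient and
remainder of `m` by `2 ^ (k + 1)`.
-/

namespace Nat

theorem size_eq_of_testBit_of_lt {n k : ℕ} (hk : n.testBit k) (hn : n < 2 ^ (k + 1)) :
    n.size = k + 1 :=
  le_antisymm (size_le.2 hn) (lt_size.2 (ge_two_pow_of_testBit hk))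

theorem testBit_size_sub_one {n : ℕ} (hn : 0 < n) : n.testBit (n.size - 1) := by
  have hs : n.size - 1 + 1 = n.size := Nat.sub_add_cancel (size_pos.2 hn)
  have hdiv : n / 2 ^ (n.size - 1) = 1 := by
    refine Nat.div_eq_of_lt_le (by simpa using lt_size.1 (by omega)) ?_
    calc n < 2 ^ n.size := lt_size_self n
      _ = (1 + 1) * 2 ^ (n.size - 1) := by nth_rw 1 [← hs]; ring
  simp [testBit_eq_decide_div_mod_eq, hdiv]

theorem odd_div_two_pow_iff_testBit {m s : ℕ} : Odd (m / 2 ^ s) ↔ m.testBit s := by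
  simp [testBit_eq_decide_div_mod_eq, Nat.odd_iff]

theorem testBit_add_mul_two_pow {q s : ℕ} (p : ℕ) (hq : q < 2 ^ s) (j : ℕ) :
    (q + p * 2 ^ s).testBit j = if j < s then q.testBit j else p.testBit (j - s) := by
  rw [add_comm, mul_comm, testBit_two_pow_mul_add p hq]

end Nat

open Nat

theorem Odd.mod_two_pow {m n : ℕ} (hm : Odd m) (hn : n ≠ 0) : Odd (m % 2 ^ n) := by
  rw [Nat.odd_iff] at hm ⊢
  rwa [Nat.mod_mod_of_dvd m (dvd_pow_self 2 hn)]

theorem fibbinary_mod_two_pow_iff {m n : ℕ} :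
    Fibbinary (m % 2 ^ n) ↔ ∀ i, i + 1 < n → ¬(m.testBit i ∧ m.testBit (i + 1)) := by
  simp only [Fibbinary, testBit_mod_two_pow, Bool.and_eq_true, decide_eq_true_eq]
  exact ⟨fun h i hi hm => h i ⟨⟨by omega, hm.1⟩, hi, hm.2⟩,
    fun h i hm => h i hm.2.1 ⟨hm.1.2, hm.2.2⟩⟩

theorem lowest_pair_add_odd_mul_two_pow_size {q p : ℕ} (hq : 0 < q) (hfib : Fibbinary q)
    (hp : Odd p) :
    let m := q + p * 2 ^ q.size
    (m.testBit (q.size - 1) ∧ m.testBit (q.size - 1 + 1)) ∧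
      ∀ i < q.size - 1, ¬(m.testBit i ∧ m.testBit (i + 1)) := by
  intro m
  have hs : q.size - 1 + 1 = q.size := Nat.sub_add_cancel (size_pos.2 hq)
  have hlow : ∀ j < q.size, m.testBit j = q.testBit j := fun j hj => by
    simp [m, testBit_add_mul_two_pow p (lt_size_self q), hj]
  have htop : m.testBit q.size := by
    simpa [m, testBit_add_mul_two_pow p (lt_size_self q), testBit_zero, Nat.odd_iff] using hp
  refine ⟨⟨?_, hs ▸ htop⟩, fun i hi => ?_⟩
  · rw [hlow _ (by omega)]
    exact testBit_size_sub_one hq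
  · rw [hlow _ (by omega), hlow _ (by omega)]
    exact hfib i

theorem odd_nonfibbinary_decomposition (m : ℕ) (hodd : Odd m) (h : ¬ Fibbinary m) :
    ∃! pq : ℕ × ℕ, Odd pq.1 ∧ Odd pq.2 ∧ Fibbinary pq.2 ∧
      m = pq.2 + pq.1 * 2 ^ Nat.size pq.2 := by
  classical
  have hex : ∃ i, m.testBit i ∧ m.testBit (i + 1) := by simpa [Fibbinary] using h
  set k := Nat.find hex
  obtain ⟨hk, hk1⟩ := Nat.find_spec hex
  have hsize : (m % 2 ^ (k + 1)).size = k + 1 :=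
    size_eq_of_testBit_of_lt (by simpa [testBit_mod_two_pow] using hk)
      (Nat.mod_lt _ (Nat.two_pow_pos _))
  refine ⟨(m / 2 ^ (k + 1), m % 2 ^ (k + 1)),
    ⟨odd_div_two_pow_iff_testBit.2 hk1, hodd.mod_two_pow k.succ_ne_zero,
      fibbinary_mod_two_pow_iff.2 fun i hi => Nat.find_min hex (by omega), ?_⟩, ?_⟩
  · rw [hsize, mul_comm]
    exact (Nat.mod_add_div m _).symm
  rintro ⟨p, q⟩ ⟨hp, hq, hfib, hm⟩
  dsimp only at hp hq hfib hm
  have hk : k = q.size - 1 := by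
    rw [Nat.find_eq_iff]
    subst hm
    exact lowest_pair_add_odd_mul_two_pow_size hq.pos hfib hp
  have hs : q.size = k + 1 := by
    have := size_pos.2 hq.pos
    omega
  rw [hs] at hm
  obtain ⟨hpm, hqm⟩ := (Nat.div_mod_unique (a := m) (Nat.two_pow_pos _)).2
    ⟨by rw [hm, mul_comm], hs ▸ lt_size_self q⟩
  rw [hpm, hqm]
end

section
/- For every odd positive integer m, either m is an odd fibbinary number, or there exist unique k ≥ 1 and an odd fibbinary number q such that m = q + (2k - 1) · 2^{L(q)}, where L(q) is the number of binary digits of q; moreover these cases are mutually exclusive and exhaust all odd positive integers. -/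
/-!
Cut the binary expansion of `m` just above its lowest pair of adjacent ones, at bits `j` and
`j + 1`: the part below, `q = m % 2 ^ (j + 1)`, is fibbinary with `L(q) = j + 1` (and odd as `m`
is), and the part above, `m / 2 ^ (j + 1)`, is odd. Conversely, in any representation
`m = q + (2k - 1) 2 ^ L(q)` bits `L(q) - 1` and `L(q)` of `m` are ones while `q` has no adjacent
ones, so the cut is forced to be at the lowest pair; a fibbinary `m` has no such pair.
-/

def IsLowestAdjacentOnes (m j : ℕ) : Prop :=
  m.testBit j ∧ m.testBit (j + 1) ∧ ∀ i < j, ¬(m.testBit i ∧ m.testBit (i + 1))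

def IsFibbinarySplit (m k q : ℕ) : Prop :=
  1 ≤ k ∧ Odd q ∧ Fibbinary q ∧ m = q + (2 * k - 1) * 2 ^ q.size

namespace IsLowestAdjacentOnes

variable {m i j : ℕ}

theorem unique (hi : IsLowestAdjacentOnes m i) (hj : IsLowestAdjacentOnes m j) : i = j := by
  rcases lt_trichotomy i j with h | h | h
  · exact absurd ⟨hi.1, hi.2.1⟩ (hj.2.2 i h)
  · exact h
  · exact absurd ⟨hj.1, hj.2.1⟩ (hi.2.2 j h)

theorem not_fibbinary (h : IsLowestAdjacentOnes m j) : ¬Fibbinary m :=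
  fun hf => hf j ⟨h.1, h.2.1⟩

end IsLowestAdjacentOnes

theorem exists_isLowestAdjacentOnes_of_not_fibbinary {m : ℕ} (hm : ¬Fibbinary m) :
    ∃ j, IsLowestAdjacentOnes m j := by
  classical
  have h : ∃ j, m.testBit j ∧ m.testBit (j + 1) := by simpa [Fibbinary] using hm
  exact ⟨Nat.find h, (Nat.find_spec h).1, (Nat.find_spec h).2, fun i hi => Nat.find_min h hi⟩

theorem fibbinary_mod_two_pow_succ_iff {m j : ℕ} :
    Fibbinary (m % 2 ^ (j + 1)) ↔ ∀ i < j, ¬(m.testBit i ∧ m.testBit (i + 1)) := by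
  simp only [Fibbinary, Nat.testBit_mod_two_pow, Bool.and_eq_true, decide_eq_true_eq]
  exact ⟨fun h i hi hb => h i ⟨⟨by omega, hb.1⟩, by omega, hb.2⟩,
    fun h i hb => h i (by omega) ⟨hb.1.2, hb.2.2⟩⟩

theorem Nat.size_eq_succ_iff {q j : ℕ} : q.size = j + 1 ↔ q < 2 ^ (j + 1) ∧ q.testBit j := by
  refine ⟨fun h => ?_, fun ⟨hlt, hbit⟩ => ?_⟩
  · have hlt : q < 2 ^ (j + 1) := h ▸ q.lt_size_self
    exact ⟨hlt, Nat.testBit_of_two_pow_le_and_two_pow_add_one_gt (Nat.lt_size.mp (by omega)) hlt⟩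
  · exact le_antisymm (Nat.size_le.mpr hlt) (Nat.lt_size.mpr (Nat.ge_two_pow_of_testBit hbit))

theorem IsFibbinarySplit.exists_isLowestAdjacentOnes {m k q : ℕ} (h : IsFibbinarySplit m k q) :
    ∃ j, IsLowestAdjacentOnes m j ∧ q = m % 2 ^ (j + 1) ∧ k = m / 2 ^ (j + 2) + 1 := by
  obtain ⟨hk, hq, hqf, hm⟩ := h
  obtain ⟨j, hj⟩ : ∃ j, q.size = j + 1 := Nat.exists_eq_add_one.mpr (Nat.size_pos.mpr hq.pos)
  obtain ⟨hq_lt, hq_top⟩ := Nat.size_eq_succ_iff.mp hj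
  rw [hj] at hm
  have hmod : m % 2 ^ (j + 1) = q := by
    rw [hm, Nat.add_mul_mod_self_right, Nat.mod_eq_of_lt hq_lt]
  have hdiv : m / 2 ^ (j + 1) = 2 * k - 1 := by
    rw [hm, Nat.add_mul_div_right _ _ (Nat.two_pow_pos _), Nat.div_eq_of_lt hq_lt, zero_add]
  refine ⟨j, ⟨?_, ?_, fibbinary_mod_two_pow_succ_iff.mp (hmod ▸ hqf)⟩, hmod.symm, ?_⟩
  · simpa [hmod, hq_top] using Nat.testBit_mod_two_pow m (j + 1) j
  · rw [Nat.testBit_eq_decide_div_mod_eq, hdiv]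
    simp only [decide_eq_true_eq]
    omega
  · rw [pow_succ, ← Nat.div_div_eq_div_mul, hdiv]
    omega

theorem IsLowestAdjacentOnes.isFibbinarySplit {m j : ℕ} (hm : Odd m)
    (hj : IsLowestAdjacentOnes m j) :
    IsFibbinarySplit m (m / 2 ^ (j + 2) + 1) (m % 2 ^ (j + 1)) := by
  obtain ⟨hbit, hbit', hlow⟩ := hj
  have hsize : (m % 2 ^ (j + 1)).size = j + 1 :=
    Nat.size_eq_succ_iff.mpr ⟨Nat.mod_lt _ (Nat.two_pow_pos _), by simp [hbit]⟩
  have hodd_div : m / 2 ^ (j + 1) % 2 = 1 := by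
    simpa [Nat.testBit_eq_decide_div_mod_eq] using hbit'
  refine ⟨Nat.le_add_left 1 _, ?_, fibbinary_mod_two_pow_succ_iff.mpr hlow, ?_⟩
  · rw [Nat.odd_iff, Nat.mod_mod_of_dvd _ (dvd_pow_self 2 j.succ_ne_zero)]
    exact Nat.odd_iff.mp hm
  · have hdiv : 2 * (m / 2 ^ (j + 2) + 1) - 1 = m / 2 ^ (j + 1) := by
      rw [pow_succ, ← Nat.div_div_eq_div_mul]
      generalize m / 2 ^ (j + 1) = t at hodd_div ⊢
      omega
    rw [hsize, hdiv, mul_comm]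
    exact (Nat.mod_add_div m _).symm

theorem odd_dichotomy (m : ℕ) (hodd : Odd m) :
    Xor' (Fibbinary m)
      (∃! kq : ℕ × ℕ, 1 ≤ kq.1 ∧ Odd kq.2 ∧ Fibbinary kq.2 ∧
        m = kq.2 + (2 * kq.1 - 1) * 2 ^ Nat.size kq.2) := by
  by_cases hf : Fibbinary m
  · refine Or.inl ⟨hf, ?_⟩
    rintro ⟨⟨k, q⟩, hsplit, -⟩
    obtain ⟨j, hj, -⟩ := IsFibbinarySplit.exists_isLowestAdjacentOnes hsplit
    exact hj.not_fibbinary hf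
  · obtain ⟨j, hj⟩ := exists_isLowestAdjacentOnes_of_not_fibbinary hf
    refine Or.inr ⟨⟨(_, _), hj.isFibbinarySplit hodd, ?_⟩, hf⟩
    rintro ⟨k, q⟩ hsplit
    obtain ⟨i, hi, rfl, rfl⟩ := IsFibbinarySplit.exists_isLowestAdjacentOnes hsplit
    rw [hi.unique hj]
end

section
/- The set of odd positive integers that are not fibbinary equals the set { q + (2k-1) · 2^{L(q)} : k ≥ 1, q an odd fibbinary number }, and the complement of the odd fibbinary numbers in the odd positive integers is the disjoint union over k ≥ 1 of the sets Ψ_k = { q + (2k-1) · 2^{L(q)} : q odd fibbinary }. -/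
/-- For `k ≥ 1`, `Ψ_k = { q + (2k-1)·2^{L(q)} : q odd fibbinary }`. -/
def Psi (k : ℕ) : Set ℕ :=
  {m : ℕ | ∃ q : ℕ, Odd q ∧ Fibbinary q ∧ m = q + (2 * k - 1) * 2 ^ Nat.size q}

/-!
Write `m = q + r · 2^s` with `q < 2^s`. The lowest pair of adjacent set bits of `m` decides
everything: if it sits at positions `(i, i + 1)`, then `q = m mod 2^(i+1)` is fibbinary with
top bit `i`, so `s = L(q) = i + 1`, and `r = ⌊m / 2^(i+1)⌋` is odd because bit `i + 1` is set.
Conversely, for `q` odd fibbinary and `r` odd the lowest pair of `q + r · 2^{L(q)}` sits at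
`(L(q) - 1, L(q))`, so `q` and `r`, hence `k = (r + 1) / 2`, are recovered from `m`.
-/

def IsLowestBitPair (m i : ℕ) : Prop :=
  (m.testBit i ∧ m.testBit (i + 1)) ∧ ∀ j < i, ¬(m.testBit j ∧ m.testBit (j + 1))

lemma IsLowestBitPair.unique {m i j : ℕ} (hi : IsLowestBitPair m i) (hj : IsLowestBitPair m j) :
    i = j := by
  rcases lt_trichotomy i j with h | h | h
  · exact absurd hi.1 (hj.2 i h)
  · exact h
  · exact absurd hj.1 (hi.2 j h)

lemma exists_isLowestBitPair {m : ℕ} (h : ¬Fibbinary m) : ∃ i, IsLowestBitPair m i := by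
  classical
  have hex : ∃ i, m.testBit i ∧ m.testBit (i + 1) := by simpa [Fibbinary] using h
  exact ⟨Nat.find hex, Nat.find_spec hex, fun j hj => Nat.find_min hex hj⟩

lemma testBit_size_sub_one {q : ℕ} (hq : 0 < q) : q.testBit (q.size - 1) := by
  have hs : 0 < q.size := Nat.size_pos.2 hq
  apply Nat.testBit_of_two_pow_le_and_two_pow_add_one_gt (Nat.lt_size.1 (by omega))
  rw [Nat.sub_add_cancel hs]
  exact Nat.lt_size_self q

lemma testBit_add_mul_two_pow_size (q r j : ℕ) :
    (q + r * 2 ^ q.size).testBit j = if j < q.size then q.testBit j else r.testBit (j - q.size) := by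
  rw [add_comm, mul_comm]
  exact Nat.testBit_two_pow_mul_add r (Nat.lt_size_self q) j

lemma isLowestBitPair_add_mul_two_pow_size {q r : ℕ} (hq : Odd q) (hfib : Fibbinary q)
    (hr : Odd r) : IsLowestBitPair (q + r * 2 ^ q.size) (q.size - 1) := by
  have hs : 0 < q.size := Nat.size_pos.2 hq.pos
  simp only [IsLowestBitPair, testBit_add_mul_two_pow_size, Nat.sub_add_cancel hs]
  refine ⟨⟨?_, ?_⟩, fun j hj => ?_⟩
  · simpa [hs] using testBit_size_sub_one hq.pos
  · simpa [Nat.odd_iff] using hr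
  · simpa [show j < q.size by omega, show j + 1 < q.size by omega] using hfib j

lemma eq_of_add_mul_two_pow_size_eq {q r q' r' : ℕ} (hq : Odd q) (hfib : Fibbinary q)
    (hr : Odd r) (hq' : Odd q') (hfib' : Fibbinary q') (hr' : Odd r')
    (h : q + r * 2 ^ q.size = q' + r' * 2 ^ q'.size) : q = q' ∧ r = r' := by
  have hsize : q.size = q'.size := by
    have := (isLowestBitPair_add_mul_two_pow_size hq hfib hr).unique
      (h ▸ isLowestBitPair_add_mul_two_pow_size hq' hfib' hr')
    have := Nat.size_pos.2 hq.pos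
    have := Nat.size_pos.2 hq'.pos
    omega
  have hlt := Nat.lt_size_self q
  have hlt' := Nat.lt_size_self q'
  rw [← hsize] at h hlt'
  have hmod := congrArg (· % 2 ^ q.size) h
  have hdiv := congrArg (· / 2 ^ q.size) h
  simp only [Nat.add_mul_mod_self_right, Nat.add_mul_div_right _ _ (Nat.two_pow_pos _),
    Nat.mod_eq_of_lt hlt, Nat.mod_eq_of_lt hlt', Nat.div_eq_of_lt hlt,
    Nat.div_eq_of_lt hlt'] at hmod hdiv
  omega

lemma size_mod_two_pow_succ {m i : ℕ} (h : m.testBit i) : (m % 2 ^ (i + 1)).size = i + 1 := by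
  have hbit : (m % 2 ^ (i + 1)).testBit i := by simp [h]
  have hle : (m % 2 ^ (i + 1)).size ≤ i + 1 := Nat.size_le.2 (Nat.mod_lt _ (Nat.two_pow_pos _))
  have hge : i < (m % 2 ^ (i + 1)).size := Nat.lt_size.2 (Nat.ge_two_pow_of_testBit hbit)
  omega

lemma fibbinary_mod_two_pow_succ {m i : ℕ} (h : IsLowestBitPair m i) :
    Fibbinary (m % 2 ^ (i + 1)) := by
  intro j
  simp only [Nat.testBit_mod_two_pow, Bool.and_eq_true, decide_eq_true_eq]
  rintro ⟨⟨-, hj⟩, hj1, hj1'⟩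
  exact h.2 j (by omega) ⟨hj, hj1'⟩

lemma odd_div_two_pow_of_testBit {m i : ℕ} (h : m.testBit i) : Odd (m / 2 ^ i) := by
  simpa [Nat.testBit_eq_decide_div_mod_eq, Nat.odd_iff] using h

lemma odd_mod_two_pow_succ {m : ℕ} (hm : Odd m) (i : ℕ) : Odd (m % 2 ^ (i + 1)) := by
  rw [Nat.odd_iff] at hm ⊢
  rwa [Nat.mod_mod_of_dvd _ (dvd_pow_self 2 (Nat.succ_ne_zero i))]

lemma exists_eq_add_mul_two_pow_size {m : ℕ} (hm : Odd m) (hnf : ¬Fibbinary m) :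
    ∃ q r, Odd q ∧ Fibbinary q ∧ Odd r ∧ m = q + r * 2 ^ q.size := by
  obtain ⟨i, hi⟩ := exists_isLowestBitPair hnf
  refine ⟨m % 2 ^ (i + 1), m / 2 ^ (i + 1), odd_mod_two_pow_succ hm i,
    fibbinary_mod_two_pow_succ hi, odd_div_two_pow_of_testBit hi.1.2, ?_⟩
  rw [size_mod_two_pow_succ hi.1.1]
  exact (Nat.mod_add_div' m _).symm

lemma odd_add_mul_two_pow_size {q : ℕ} (hq : Odd q) (r : ℕ) : Odd (q + r * 2 ^ q.size) :=
  hq.add_even ((Nat.even_pow.2 ⟨even_two, (Nat.size_pos.2 hq.pos).ne'⟩).mul_left r)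

lemma not_fibbinary_add_mul_two_pow_size {q r : ℕ} (hq : Odd q) (hfib : Fibbinary q)
    (hr : Odd r) : ¬Fibbinary (q + r * 2 ^ q.size) :=
  fun h => h _ (isLowestBitPair_add_mul_two_pow_size hq hfib hr).1

theorem odd_nonfibbinary_partition :
    {m : ℕ | 0 < m ∧ Odd m ∧ ¬ Fibbinary m} = ⋃ k ∈ Set.Ici 1, Psi k ∧
    ∀ k₁ ∈ Set.Ici 1, ∀ k₂ ∈ Set.Ici 1, k₁ ≠ k₂ → Disjoint (Psi k₁) (Psi k₂) := by
  have odd_two_mul_sub_one {k : ℕ} (hk : k ∈ Set.Ici 1) : Odd (2 * k - 1) :=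
    ⟨k - 1, by simp only [Set.mem_Ici] at hk; omega⟩
  refine ⟨Set.ext fun m => ⟨?_, ?_⟩, ?_⟩
  · rintro ⟨-, hm, hnf⟩
    obtain ⟨q, r, hq, hfib, ⟨t, rfl⟩, rfl⟩ := exists_eq_add_mul_two_pow_size hm hnf
    refine Set.mem_biUnion (x := t + 1) (by simp) ⟨q, hq, hfib, ?_⟩
    rw [show 2 * (t + 1) - 1 = 2 * t + 1 by omega]
  · simp only [Set.mem_iUnion]
    rintro ⟨k, hk, q, hq, hfib, rfl⟩
    exact ⟨(odd_add_mul_two_pow_size hq _).pos, odd_add_mul_two_pow_size hq _,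
      not_fibbinary_add_mul_two_pow_size hq hfib (odd_two_mul_sub_one hk)⟩
  · intro k₁ hk₁ k₂ hk₂ hne
    refine Set.disjoint_left.2 ?_
    rintro m ⟨q₁, hq₁, hfib₁, rfl⟩ ⟨q₂, hq₂, hfib₂, h⟩
    have hk := (eq_of_add_mul_two_pow_size_eq hq₁ hfib₁ (odd_two_mul_sub_one hk₁) hq₂ hfib₂
      (odd_two_mul_sub_one hk₂) h).2
    omega
end

section
/- For every k ≥ 1, the smallest element of Φ_k is 4k - 1, where Φ_k = { 2^r · (q + (2k-1) · 2^{L(q)}) : r ≥ 0, q an odd fibbinary number }. -/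
def Phi (k : ℕ) : Set ℕ :=
  {m : ℕ | ∃ r q : ℕ, Odd q ∧ Fibbinary q ∧
    m = 2 ^ r * (q + (2 * k - 1) * 2 ^ Nat.size q)}

theorem phi_least (k : ℕ) (hk : 1 ≤ k) : IsLeast (Phi k) (4 * k - 1) := by
  constructor
  · refine ⟨0, 1, odd_one, ?_, ?_⟩
    · intro i ⟨h1, h2⟩
      rw [Nat.testBit_one_eq_true_iff_self_eq_zero] at h2
      simp at h2
    · have : Nat.size 1 = 1 := Nat.size_one
      rw [this]
      omega
  · rintro m ⟨r, q, hq, -, rfl⟩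
    have hq1 : 1 ≤ q := hq.pos
    have hs : 1 ≤ Nat.size q := by
      exact Nat.size_pos.mpr hq1
    have h2 : 2 ≤ 2 ^ Nat.size q := by
      calc 2 = 2 ^ 1 := rfl
        _ ≤ 2 ^ Nat.size q := Nat.pow_le_pow_right (by norm_num) hs
    have hr : 1 ≤ 2 ^ r := Nat.one_le_two_pow
    have hk2 : 1 ≤ 2 * k - 1 := by omega
    calc 4 * k - 1 = 1 * (1 + (2 * k - 1) * 2) := by omega
      _ ≤ 2 ^ r * (q + (2 * k - 1) * 2 ^ Nat.size q) := by
          exact Nat.mul_le_mul hr (Nat.add_le_add hq1 (Nat.mul_le_mul_left _ h2))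
end

section
/- For each k ≥ 1, the set Φ_k is closed under the operations j ↦ 2j and j ↦ 4j + 1, and contains no element of the form 4j - 1 with j ∈ Φ_k. -/
/-!
Write `j = 2 ^ r * (q + c * 2 ^ L(q))` with `c = 2k - 1`. Doubling `j` raises `r`, and
`4j + 1 = q' + c * 2 ^ L(q')` for the odd fibbinary `q' = 2 ^ (r + 2) * q + 1`, whose bits are
those of `q` followed by `r + 1` zeros and a one.

Conversely, an odd element of `Φ_k` has `r = 0`. An odd fibbinary `q` is `1 mod 4`, so
`q + c * 2 ^ L(q) ≡ 3 mod 4` forces `L(q) = 1`, i.e. `q = 1`. Then `4j - 1 = 1 + 2c` leaves only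
`j = k`, but every element of `Φ_k` exceeds `k`.
-/

namespace Nat

lemma size_two_mul_add_one (n : ℕ) : size (2 * n + 1) = size n + 1 := by
  simpa [bit_val] using size_bit (b := true) (n := n) (by simp [bit_val])

lemma size_two_mul {n : ℕ} (hn : n ≠ 0) : size (2 * n) = size n + 1 := by
  simpa [bit_val] using size_bit (b := false) (n := n) (by simp [bit_val, hn])

lemma size_two_pow_mul {n : ℕ} (hn : n ≠ 0) (r : ℕ) : size (2 ^ r * n) = size n + r := by
  rw [mul_comm, ← shiftLeft_eq, size_shiftLeft hn]

end Nat

namespace Fibbinary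

variable {n : ℕ}

lemma two_mul (h : Fibbinary n) : Fibbinary (2 * n) := by
  rintro (_ | i) ⟨hi, hi'⟩
  · simp [Nat.testBit_zero] at hi
  · rw [Nat.testBit_add_one, Nat.mul_div_cancel_left n two_pos] at hi hi'
    exact h i ⟨hi, hi'⟩

lemma two_pow_mul (h : Fibbinary n) (r : ℕ) : Fibbinary (2 ^ r * n) := by
  induction r with
  | zero => simpa using h
  | succ r ih => simpa [pow_succ, mul_comm, mul_left_comm] using ih.two_mul

lemma four_mul_add_one (h : Fibbinary n) : Fibbinary (4 * n + 1) := by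
  have hdiv : (4 * n + 1) / 2 / 2 = n := by omega
  rintro (_ | _ | i) ⟨hi, hi'⟩
  · simp only [zero_add, Nat.testBit_add_one, Nat.testBit_zero, decide_eq_true_eq] at hi'
    omega
  · simp only [zero_add, Nat.testBit_add_one, Nat.testBit_zero, decide_eq_true_eq] at hi
    omega
  · rw [Nat.testBit_add_one, Nat.testBit_add_one, hdiv] at hi hi'
    exact h i ⟨hi, hi'⟩

lemma mod_four_eq_one (hodd : Odd n) (h : Fibbinary n) : n % 4 = 1 := by
  have := h 0
  simp only [Nat.testBit_zero, Nat.testBit_add_one, decide_eq_true_eq, zero_add] at this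
  have := Nat.odd_iff.1 hodd
  omega

end Fibbinary

lemma eq_one_of_add_mul_two_pow_size_mod_four {q c : ℕ} (hodd : Odd q) (hfib : Fibbinary q)
    (h3 : (q + c * 2 ^ Nat.size q) % 4 = 3) : q = 1 := by
  have hq := hfib.mod_four_eq_one hodd
  have hsize : 0 < Nat.size q := Nat.size_pos.2 hodd.pos
  have hsize1 : Nat.size q ≤ 1 := by
    by_contra! hs
    obtain ⟨d, hd⟩ : 4 ∣ 2 ^ Nat.size q := pow_dvd_pow 2 hs
    rw [hd, mul_left_comm, Nat.add_mul_mod_self_left] at h3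
    omega
  have := Nat.size_le.1 hsize1
  omega

lemma lt_of_mem_Phi {k m : ℕ} (hm : m ∈ Phi k) : k < m := by
  obtain ⟨r, q, hodd, -, rfl⟩ := hm
  have hq := hodd.pos
  have hpow : 2 ≤ 2 ^ Nat.size q := by
    simpa using Nat.pow_le_pow_right two_pos (Nat.size_pos.2 hq)
  calc k < q + (2 * k - 1) * 2 := by omega
    _ ≤ q + (2 * k - 1) * 2 ^ Nat.size q := by gcongr
    _ ≤ 2 ^ r * (q + (2 * k - 1) * 2 ^ Nat.size q) := Nat.le_mul_of_pos_left _ (by positivity)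

theorem phi_closure_general (k : ℕ) :
    (∀ j ∈ Phi k, 2 * j ∈ Phi k ∧ 4 * j + 1 ∈ Phi k) ∧
    (∀ j ∈ Phi k, 4 * j - 1 ∉ Phi k) := by
  refine ⟨fun j ⟨r, q, hodd, hfib, hj⟩ => ⟨?_, ?_⟩, fun j hj hmem => ?_⟩
  · exact ⟨r + 1, q, hodd, hfib, by rw [hj]; ring⟩
  · refine ⟨0, 4 * (2 ^ r * q) + 1, ⟨2 * (2 ^ r * q), by ring⟩,
      (hfib.two_pow_mul r).four_mul_add_one, ?_⟩
    have hq : q ≠ 0 := hodd.pos.ne'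
    rw [show 4 * (2 ^ r * q) + 1 = 2 * (2 * (2 ^ r * q)) + 1 by ring, Nat.size_two_mul_add_one,
      Nat.size_two_mul (by positivity), Nat.size_two_pow_mul hq, hj]
    ring
  · have hkj := lt_of_mem_Phi hj
    obtain ⟨r, q, hodd, hfib, hrq⟩ := hmem
    obtain rfl : r = 0 := by
      rcases r with _ | r
      · rfl
      · have : 2 ∣ 4 * j - 1 :=
          ⟨2 ^ r * (q + (2 * k - 1) * 2 ^ Nat.size q), by rw [hrq]; ring⟩
        omega
    rw [pow_zero, one_mul] at hrq
    obtain rfl : q = 1 :=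
      eq_one_of_add_mul_two_pow_size_mod_four (c := 2 * k - 1) hodd hfib (by omega)
    rw [Nat.size_one] at hrq
    omega

theorem phi_closure (k : ℕ) (hk : 1 ≤ k) :
    (∀ j ∈ Phi k, 2 * j ∈ Phi k ∧ 4 * j + 1 ∈ Phi k) ∧
    (∀ j ∈ Phi k, 4 * j - 1 ∉ Phi k) :=
  phi_closure_general k
end
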